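/- arXiv:1207.3532 — 6 statements merged into one kernel-verified Lean document; each statement's English description precedes it below -/
import Mathlib

section
/- For a random string of length k+1 over a 4-letter alphabet with i.i.d. uniform symbols, the probability P_1(k,p) that either the first or the last length-p substring is the unique lexicographically minimum p-substring of the string satisfies P_1(k,p) ≤ (p+1)/(k+1). -/
open scoped Classical

def substr {α : Type*} (s : List α) (i len : ℕ) : List α := (s.drop i).take len

/-- The length-`p` substring of `s` starting at position `i` is the *unique* minimum
`p`-substring of `s`: it is strictly smaller than every `p`-substring at another position. -/
def uniqueMinAt {α : Type*} [LinearOrder α] (s : List α) (p i : ℕ) : Prop :=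
  i + p ≤ s.length ∧ ∀ j, j + p ≤ s.length → j ≠ i → substr s i p < substr s j p

/-- `P₁(k,p)`: probability that, for a string drawn uniformly from `{0,1,2,3}^{k+1}`,
the first or the last `p`-substring is the unique minimum `p`-substring. -/
noncomputable def P1 (k p : ℕ) : ℚ :=
  ((Finset.univ.filter fun s : Fin (k + 1) → Fin 4 =>
    uniqueMinAt (List.ofFn s) p 0 ∨ uniqueMinAt (List.ofFn s) p (k + 1 - p)).card : ℚ)
    / 4 ^ (k + 1)

/-!
Read a string of length `n = k + 1` as a circular string `t : ZMod n → α` cut open at `0`.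
Rotating is a bijection on strings, so `n · P₁` is the average over `t` of the number of
rotations of `t` whose first or last `p`-window is the unique minimum. Let `M z` be the circular
`p`-window at `z` and `m = n - p`. The rotation starting at `r` qualifies through its first window
only if `M r` is smaller than the `m` windows after it (`r ∈ F`), and through its last window only
if `M (r + m)` is smaller than the `m` windows before it (`r + m ∈ B`). Then `F + m` and `B` are
disjoint (otherwise `M r < M (r + m) < M r`), and both miss the `m - 1` positions after the element
of `B` with the smallest window, so `|F| + |B| ≤ n - m + 1 = p + 1`.
-/

open Finset

namespace ZMod

variable {n : ℕ}

lemma card_image_add_natCast_Icc (x : ZMod n) {j : ℕ} (hj : j ≤ n) :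
    #((Icc 1 j).image fun d : ℕ => x + d) = j := by
  rw [card_image_of_injOn, Nat.card_Icc, Nat.add_sub_cancel]
  intro a ha b hb hab
  simp only [coe_Icc, Set.mem_Icc] at ha hb
  refine ((natCast_eq_natCast_iff a b n).mp (add_left_cancel hab)).eq_of_abs_lt ?_
  rw [abs_lt]
  omega

lemma card_le_sub_of_forall_add_notMem [NeZero n] {s : Finset (ZMod n)} (x : ZMod n) {j : ℕ}
    (hj : j ≤ n) (h : ∀ d ∈ Icc 1 j, x + d ∉ s) : #s ≤ n - j := by
  have hsub : s ⊆ ((Icc 1 j).image fun d : ℕ => x + d)ᶜ := by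
    intro z hz
    simp only [mem_compl, mem_image, not_exists, not_and]
    rintro d hd rfl
    exact h d hd hz
  simpa [card_compl, card_image_add_natCast_Icc x hj] using card_le_card hsub

end ZMod

namespace CircularString

section Minima

variable {n : ℕ} [NeZero n] {C : Type*} [LinearOrder C] (M : ZMod n → C) (m : ℕ)

noncomputable def forwardMinima : Finset (ZMod n) := {z | ∀ d ∈ Icc 1 m, M z < M (z + d)}

noncomputable def backwardMinima : Finset (ZMod n) := {z | ∀ d ∈ Icc 1 m, M z < M (z - d)}

variable {M m}

lemma mem_forwardMinima {z : ZMod n} :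
    z ∈ forwardMinima M m ↔ ∀ d ∈ Icc 1 m, M z < M (z + d) := by
  simp [forwardMinima]

lemma mem_backwardMinima {z : ZMod n} :
    z ∈ backwardMinima M m ↔ ∀ d ∈ Icc 1 m, M z < M (z - d) := by
  simp [backwardMinima]

lemma add_notMem_backwardMinima {r : ZMod n} (hr : r ∈ forwardMinima M m) {d : ℕ}
    (hd : d ∈ Icc 1 m) : r + d ∉ backwardMinima M m := fun h =>
  lt_asymm (mem_forwardMinima.mp hr d hd) (by simpa using mem_backwardMinima.mp h d hd)

variable (M)

lemma card_forwardMinima_le (hm : m ≤ n) : #(forwardMinima M m) ≤ n - m := by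
  obtain hF | hF := (forwardMinima M m).eq_empty_or_nonempty
  · simp [hF]
  obtain ⟨r, hr, hmax⟩ := (forwardMinima M m).exists_max_image M hF
  exact ZMod.card_le_sub_of_forall_add_notMem r hm fun d hd h =>
    (hmax _ h).not_gt (mem_forwardMinima.mp hr d hd)

lemma card_forwardMinima_add_card_backwardMinima_le (hm₁ : 1 ≤ m) (hm : m ≤ n) :
    #(forwardMinima M m) + #(backwardMinima M m) ≤ n - m + 1 := by
  obtain hB | hB := (backwardMinima M m).eq_empty_or_nonempty
  · simpa [hB] using (card_forwardMinima_le M hm).trans (Nat.le_succ _)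
  obtain ⟨e, he, hmin⟩ := (backwardMinima M m).exists_min_image M hB
  set A := (forwardMinima M m).image (· + (m : ZMod n))
  have hA : #A = #(forwardMinima M m) := card_image_of_injective _ (add_left_injective _)
  have hdisj : Disjoint A (backwardMinima M m) := by
    simp only [A, disjoint_left, mem_image]
    rintro _ ⟨r, hr, rfl⟩
    exact add_notMem_backwardMinima hr (by simp; omega)
  have havoid : ∀ d ∈ Icc 1 (m - 1), e + d ∉ A ∪ backwardMinima M m := by
    intro d hd h
    simp only [mem_Icc] at hd
    obtain ⟨r, hr, hre⟩ | h := mem_union.mp h |>.imp_left mem_image.mp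
    · have : e = r + (m - d : ℕ) := by
        rw [Nat.cast_sub (by omega), add_sub, hre, add_sub_cancel_right]
      exact add_notMem_backwardMinima hr (by simp; omega) (this ▸ he)
    · refine (hmin _ h).not_gt ?_
      simpa using mem_backwardMinima.mp h d (by simp; omega)
  have := ZMod.card_le_sub_of_forall_add_notMem e (by omega) havoid
  rw [card_union_of_disjoint hdisj, hA] at this
  omega

end Minima

variable {n : ℕ} {α : Type*}

def toList (t : ZMod n → α) : List α := List.ofFn fun i : Fin n => t (i : ℕ)

@[simp]
lemma length_toList (t : ZMod n → α) : (toList t).length = n := List.length_ofFn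

lemma toList_eq_ofFn_comp_finEquiv [NeZero n] (t : ZMod n → α) :
    toList t = List.ofFn (t ∘ ZMod.finEquiv n) := by
  obtain ⟨k, rfl⟩ := Nat.exists_eq_succ_of_ne_zero (NeZero.ne n)
  exact congrArg List.ofFn (funext fun i => congrArg t (Fin.cast_val_eq_self i))

lemma card_filter_toList [NeZero n] [Fintype α] (P : List α → Prop) :
    #{t : ZMod n → α | P (toList t)} = #{s : Fin n → α | P (List.ofFn s)} :=
  card_equiv ((ZMod.finEquiv n).toEquiv.symm.arrowCongr (Equiv.refl α)) fun t => by
    simp only [mem_filter, mem_univ, true_and, toList_eq_ofFn_comp_finEquiv]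
    rfl

def window (p : ℕ) (t : ZMod n → α) (z : ZMod n) : List α :=
  List.ofFn fun a : Fin p => t (z + (a : ℕ))

def rotate (r : ZMod n) (t : ZMod n → α) : ZMod n → α := fun i => t (r + i)

@[simp]
lemma rotate_zero (t : ZMod n → α) : rotate 0 t = t := funext fun i => by simp [rotate]

@[simp]
lemma rotate_rotate (r r' : ZMod n) (t : ZMod n → α) :
    rotate r (rotate r' t) = rotate (r' + r) t :=
  funext fun i => by simp [rotate, add_assoc]

lemma card_filter_rotate [NeZero n] [Fintype α] (P : (ZMod n → α) → Prop) (r : ZMod n) :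
    #{t | P (rotate r t)} = #{t | P t} :=
  card_nbij' (rotate r) (rotate (-r)) (by simp [Set.MapsTo]) (by simp [Set.MapsTo])
    (by simp [Set.LeftInvOn]) (by simp [Set.LeftInvOn])

lemma substr_toList_rotate (r : ZMod n) (t : ZMod n → α) {j p : ℕ} (hj : j + p ≤ n) :
    substr (toList (rotate r t)) j p = window p t (r + j) := by
  refine List.ext_getElem (by simp [substr, window]; omega) fun i _ _ => ?_
  simp only [substr, toList, window, rotate, List.getElem_take, List.getElem_drop,
    List.getElem_ofFn, Nat.cast_add, add_assoc]

variable [LinearOrder α]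

def IsEndUniqueMin (s : List α) (p : ℕ) : Prop :=
  uniqueMinAt s p 0 ∨ uniqueMinAt s p (s.length - p)

lemma mem_forwardMinima_of_uniqueMinAt [NeZero n] {p : ℕ} {r : ZMod n} {t : ZMod n → α}
    (h : uniqueMinAt (toList (rotate r t)) p 0) : r ∈ forwardMinima (window p t) (n - p) := by
  refine mem_forwardMinima.mpr fun d hd => ?_
  simp only [mem_Icc] at hd
  have := h.2 d (by simp; omega) (by omega)
  rwa [substr_toList_rotate r t (by omega), substr_toList_rotate r t (by omega),
    Nat.cast_zero, add_zero] at this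

lemma add_mem_backwardMinima_of_uniqueMinAt [NeZero n] {p : ℕ} {r : ZMod n} {t : ZMod n → α}
    (h : uniqueMinAt (toList (rotate r t)) p (n - p)) :
    r + (n - p : ℕ) ∈ backwardMinima (window p t) (n - p) := by
  refine mem_backwardMinima.mpr fun d hd => ?_
  simp only [mem_Icc] at hd
  have := h.2 (n - p - d) (by simp; omega) (by omega)
  rwa [substr_toList_rotate r t (by omega), substr_toList_rotate r t (by omega),
    Nat.cast_sub (by omega : d ≤ n - p), ← add_sub_assoc] at this

variable [NeZero n]

lemma card_rotate_isEndUniqueMin_le {p : ℕ} (hpn : p < n) (t : ZMod n → α) :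
    #{r | IsEndUniqueMin (toList (rotate r t)) p} ≤ p + 1 := by
  set F := forwardMinima (window p t) (n - p)
  set B := backwardMinima (window p t) (n - p)
  have hsub : ({r | IsEndUniqueMin (toList (rotate r t)) p} : Finset (ZMod n)) ⊆
      F ∪ B.image (· - (n - p : ℕ)) := by
    intro r hr
    simp only [IsEndUniqueMin, length_toList, mem_filter, mem_univ, true_and] at hr
    rcases hr with h | h
    · exact mem_union_left _ (mem_forwardMinima_of_uniqueMinAt h)
    · exact mem_union_right _
        (mem_image.mpr ⟨_, add_mem_backwardMinima_of_uniqueMinAt h, add_sub_cancel_right _ _⟩)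
  calc _ ≤ #(F ∪ B.image (· - (n - p : ℕ))) := card_le_card hsub
    _ ≤ #F + #B := (card_union_le _ _).trans (Nat.add_le_add_left card_image_le _)
    _ ≤ n - (n - p) + 1 := card_forwardMinima_add_card_backwardMinima_le _ (by omega) (by omega)
    _ = p + 1 := by omega

lemma mul_card_isEndUniqueMin_le [Fintype α] {p : ℕ} (hpn : p < n) :
    n * #{t : ZMod n → α | IsEndUniqueMin (toList t) p} ≤ Fintype.card α ^ n * (p + 1) := by
  simpa [card_univ, ZMod.card] using card_mul_le_card_mul
    (fun (r : ZMod n) (t : ZMod n → α) => IsEndUniqueMin (toList (rotate r t)) p)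
    (s := univ) (t := univ)
    (fun r _ => (card_filter_rotate _ r).ge)
    (fun t _ => card_rotate_isEndUniqueMin_le hpn t)

end CircularString

open CircularString in
theorem stmt2_general (k p : ℕ) (hpk : p ≤ k) :
    P1 k p ≤ ((p : ℚ) + 1) / ((k : ℚ) + 1) := by
  have hcount := mul_card_isEndUniqueMin_le (α := Fin 4) (n := k + 1) (p := p) (by omega)
  rw [card_filter_toList (IsEndUniqueMin · p), Fintype.card_fin] at hcount
  simp only [IsEndUniqueMin, List.length_ofFn] at hcount
  rw [P1, div_le_div_iff₀ (by positivity) (by positivity), mul_comm, mul_comm ((p : ℚ) + 1)]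
  exact_mod_cast hcount

/-- `P₁(k,p) ≤ (p+1)/(k+1)`. -/
theorem stmt2 (k p : ℕ) (hp : 0 < p) (hpk : p ≤ k) :
    P1 k p ≤ ((p : ℚ) + 1) / ((k : ℚ) + 1) :=
  stmt2_general k p hpk
end

section
/- Under the cyclic-rotation argument: given any string s of length k+1, form the cyclic ring by joining its last symbol to its first, and consider the k+1 linear strings R_0,...,R_k of length k+1 obtained by reading the ring starting at each position. Let r be a lexicographically minimum p-substring over all p-substrings appearing in all R_i. Then at most p+1 of the strings R_i have the property that their first or last p-substring is their unique minimum p-substring. -/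
/-!
Fix a position `m₀` of the ring at which a lexicographically least cyclic `p`-substring starts.
In the rotation `R_j` that occurrence sits at offset `m₀ - j`; unless it wraps around the end of
`R_j`, it is a `p`-substring of `R_j` no larger than any other, so if `R_j` has a unique minimum
`p`-substring, that minimum sits at offset `m₀ - j`. If the minimum is the prefix or the suffix
of `R_j`, this forces `j` to be one of the `p + 1` positions `m₀, m₀ + 1, …, m₀ + p`.
-/

open scoped Classical

/-- The rotation `R_j` of a length-(k+1) string `s`, read cyclically starting at `j`. -/
def rot {α : Type*} {k : ℕ} (s : Fin (k + 1) → α) (j : Fin (k + 1)) : List α :=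
  List.ofFn fun i => s (j + i)

open Fin.NatCast

theorem uniqueMinAt.eq_of_substr_le {α : Type*} [LinearOrder α] {l : List α} {p i₀ i : ℕ}
    (h : uniqueMinAt l p i₀) (hi : i + p ≤ l.length) (hle : substr l i p ≤ substr l i₀ p) :
    i = i₀ := by
  by_contra hne
  exact (h.2 i hi hne).not_ge hle

section Rotation

variable {α : Type*} {k p : ℕ}

@[simp]
theorem length_rot (s : Fin (k + 1) → α) (j : Fin (k + 1)) : (rot s j).length = k + 1 :=
  List.length_ofFn

theorem substr_rot (s : Fin (k + 1) → α) (j : Fin (k + 1)) {i : ℕ} (h : i + p ≤ k + 1) :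
    substr (rot s j) i p = (rot s (j + i)).take p := by
  apply List.ext_getElem
  · simp only [substr, List.length_take, List.length_drop, length_rot]
    omega
  · intro t _ _
    simp only [substr, rot, List.getElem_take, List.getElem_drop, List.getElem_ofFn]
    congr 1
    ext
    simp only [Fin.val_add, Fin.val_natCast, Nat.add_mod_mod, Nat.mod_add_mod, add_assoc]

variable [LinearOrder α] {s : Fin (k + 1) → α} {m₀ : Fin (k + 1)}

theorem offset_eq_of_uniqueMinAt_rot (hmin : ∀ m, (rot s m₀).take p ≤ (rot s m).take p)
    {j : Fin (k + 1)} {i₀ : ℕ} (h : uniqueMinAt (rot s j) p i₀) :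
    (m₀ - j).val = i₀ ∨ k + 1 < (m₀ - j).val + p := by
  refine or_iff_not_imp_right.2 fun hfit => ?_
  have hi₀ : i₀ + p ≤ k + 1 := length_rot s j ▸ h.1
  refine h.eq_of_substr_le (by simp only [length_rot]; omega) ?_
  rw [substr_rot s j (by omega), substr_rot s j hi₀, Fin.cast_val_eq_self, add_sub_cancel]
  exact hmin _

theorem val_sub_le_of_uniqueMinAt_prefix_or_suffix
    (hmin : ∀ m, (rot s m₀).take p ≤ (rot s m).take p) {j : Fin (k + 1)}
    (h : uniqueMinAt (rot s j) p 0 ∨ uniqueMinAt (rot s j) p (k + 1 - p)) :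
    (j - m₀).val ≤ p := by
  have hwrap : m₀ - j = 0 ∨ k + 1 ≤ (m₀ - j).val + p := by
    rw [← Fin.val_eq_zero_iff]
    rcases h with h | h
    · rcases offset_eq_of_uniqueMinAt_rot hmin h with h' | h' <;> omega
    · have hp := h.1
      rw [length_rot] at hp
      rcases offset_eq_of_uniqueMinAt_rot hmin h with h' | h' <;> omega
  rw [← neg_sub, Fin.val_neg]
  split_ifs with h0
  · exact Nat.zero_le p
  · have := (m₀ - j).isLt
    omega

end Rotation

theorem stmt3_general {α : Type*} [LinearOrder α] (k p : ℕ) (s : Fin (k + 1) → α) :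
    (Finset.univ.filter fun j : Fin (k + 1) =>
      uniqueMinAt (rot s j) p 0 ∨ uniqueMinAt (rot s j) p (k + 1 - p)).card ≤ p + 1 := by
  obtain ⟨m₀, -, hm₀⟩ :=
    Finset.exists_min_image Finset.univ (fun m => (rot s m).take p) Finset.univ_nonempty
  calc _ ≤ (Finset.range (p + 1)).card := by
        refine Finset.card_le_card_of_injOn (fun j => (j - m₀).val) (fun j hj => ?_)
          fun a _ b _ hab => sub_left_injective (Fin.val_injective hab)
        exact Finset.mem_range_succ_iff.2 <| val_sub_le_of_uniqueMinAt_prefix_or_suffix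
          (fun m => hm₀ m (Finset.mem_univ m)) (Finset.mem_filter.1 hj).2
    _ = p + 1 := Finset.card_range _

/-- among the `k+1` cyclic rotations `R_0, …, R_k` of a length-(k+1)
string, at most `p+1` have the property that their first or last `p`-substring is
their unique minimum `p`-substring. -/
theorem stmt3 {α : Type*} [LinearOrder α] (k p : ℕ) (hp : 0 < p) (hpk : p ≤ k)
    (s : Fin (k + 1) → α) :
    (Finset.univ.filter fun j : Fin (k + 1) =>
      uniqueMinAt (rot s j) p 0 ∨ uniqueMinAt (rot s j) p (k + 1 - p)).card ≤ p + 1 :=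
  stmt3_general k p s
end

section
/- In the random string model over a 4-letter alphabet with uniform i.i.d. symbols, for any integer a > 0, P_1(k+a, p+a) ≤ 2·P_1(k,p) + (p+2)/4^p, where P_1(k,p) is the probability that in a uniform random string of length k+1 the first or last p-substring is the unique minimum p-substring. -/
open scoped Classical

/-!
Cutting a string of length `k + a + 1` after its first `k + 1` letters sends a string whose first
or last `(p + a)`-window is the unique minimum to one whose first or last `p`-window is a (possibly
tied) minimum, and each image has `4 ^ a` preimages. It remains to count the strings of length `n`
whose end window is a minimum tied with another window. If some tie is disjoint from the end
window, the end window is the least window disjoint from it, so the string is determined by its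
`n - p` letters outside the end window. Otherwise the nearest tie is at distance `d < p`: the
`d + p` letters starting at the first of the two tied windows are `d`-periodic, and the first
window of their period word is strictly smaller than those of its other `d - 1` rotations. No two
rotations of a word can both have this property, so there are at most `4 ^ d / d` such period
words and `4 ^ (n - p) / d` such strings. Since `harmonic (p - 1) ≤ p / 2`, each end contributes
at most `(1 + p / 2) * 4 ^ (n - p)` strings.
-/

open Finset Fin.NatCast

variable {α : Type*}

theorem List.le_of_append_lt_append [LinearOrder α] {l₁ l₂ m₁ m₂ : List α}
    (hlen : l₁.length = l₂.length) (h : l₁ ++ m₁ < l₂ ++ m₂) : l₁ ≤ l₂ := by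
  rw [← not_lt]
  induction l₁ generalizing l₂ with
  | nil => cases l₂ with
    | nil => exact lt_irrefl _
    | cons => simp at hlen
  | cons a l₁ ih => cases l₂ with
    | nil => simp at hlen
    | cons b l₂ =>
      rw [List.cons_append, List.cons_append, List.cons_lt_cons_iff] at h
      rw [List.cons_lt_cons_iff]
      rcases h with hab | ⟨rfl, h⟩
      · rintro (hba | ⟨rfl, -⟩) <;> exact lt_irrefl _ (by order)
      · rintro (hba | ⟨-, h'⟩)
        · exact lt_irrefl _ hba
        · exact ih (by simpa using hlen) h h'

section Window

variable {n m : ℕ} [NeZero n] [NeZero m]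

/-- The `p` letters of `s` from position `i` on, positions read modulo `n`: for `i + p ≤ n` this
is the usual factor, and for a word of length `d` it is a factor of its `d`-periodic extension. -/
def window (s : Fin n → α) (p i : ℕ) : List α :=
  List.ofFn fun t : Fin p => s ↑(i + t : ℕ)

theorem window_eq_window_iff {s : Fin n → α} {s' : Fin m → α} {p i j : ℕ} :
    window s p i = window s' p j ↔ ∀ t < p, s ↑(i + t) = s' ↑(j + t) := by
  simp [window, List.ofFn_inj, funext_iff, Fin.forall_iff]

theorem length_window (s : Fin n → α) (p i : ℕ) : (window s p i).length = p := List.length_ofFn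

theorem window_add (s : Fin n → α) (p a i : ℕ) :
    window s (p + a) i = window s p i ++ window s a (i + p) := by
  simp [window, List.ofFn_add, add_assoc]

theorem window_le_window_of_lt [LinearOrder α] {s : Fin n → α} {p a i j : ℕ}
    (h : window s (p + a) i < window s (p + a) j) : window s p i ≤ window s p j := by
  rw [window_add, window_add] at h
  exact List.le_of_append_lt_append (by simp only [length_window]) h

theorem substr_ofFn (s : Fin n → α) {p i : ℕ} (h : i + p ≤ n) :
    substr (List.ofFn s) i p = window s p i := by
  apply List.ext_getElem
  · simp [substr, window]; omega
  · intro t _ ht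
    rw [length_window] at ht
    simp only [substr, window, List.getElem_take, List.getElem_drop, List.getElem_ofFn]
    exact congrArg s (Fin.natCast_eq_mk (show i + t < n by omega)).symm

theorem window_castLE {N : ℕ} [NeZero N] (hnN : n ≤ N) (s : Fin N → α) {p j : ℕ}
    (h : j + p ≤ n) : window (fun x => s (Fin.castLE hnN x)) p j = window s p j := by
  refine window_eq_window_iff.2 fun t ht => congrArg s (Fin.ext ?_)
  rw [Fin.val_castLE, Fin.val_natCast, Fin.val_natCast, Nat.mod_eq_of_lt (by omega),
    Nat.mod_eq_of_lt (by omega)]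

end Window

section MinWindow

variable [LinearOrder α] {n : ℕ} [NeZero n]

def IsMinWindow (s : Fin n → α) (p i : ℕ) : Prop :=
  i + p ≤ n ∧ ∀ j, j + p ≤ n → window s p i ≤ window s p j

def HasDisjointTie (s : Fin n → α) (p i : ℕ) : Prop :=
  IsMinWindow s p i ∧ ∃ j, j + p ≤ n ∧ (j + p ≤ i ∨ i + p ≤ j) ∧ window s p j = window s p i

def HasPeriodicTie (s : Fin n → α) (p d i : ℕ) : Prop :=
  i + d + p ≤ n ∧ window s p (i + d) = window s p i ∧
    ∀ e, 0 < e → e < d → window s p i < window s p (i + e)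

theorem uniqueMinAt_ofFn_iff {s : Fin n → α} {p i : ℕ} :
    uniqueMinAt (List.ofFn s) p i ↔
      i + p ≤ n ∧ ∀ j, j + p ≤ n → j ≠ i → window s p i < window s p j := by
  simp only [uniqueMinAt, List.length_ofFn]
  refine and_congr_right fun hi => forall₂_congr fun j hj => ?_
  rw [substr_ofFn s hi, substr_ofFn s hj]

variable {s : Fin n → α} {p i : ℕ}

theorem IsMinWindow.uniqueMinAt_or_exists_tie (h : IsMinWindow s p i) :
    uniqueMinAt (List.ofFn s) p i ∨ ∃ j, j + p ≤ n ∧ j ≠ i ∧ window s p j = window s p i := by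
  refine or_iff_not_imp_right.2 fun htie => uniqueMinAt_ofFn_iff.2 ⟨h.1, fun j hj hji => ?_⟩
  exact (h.2 j hj).lt_of_ne fun heq => htie ⟨j, hj, hji, heq.symm⟩

theorem IsMinWindow.of_uniqueMinAt_castLE {N : ℕ} [NeZero N] (hnN : n ≤ N) {s : Fin N → α}
    (h : uniqueMinAt (List.ofFn s) (p + (N - n)) i) :
    IsMinWindow (fun x => s (Fin.castLE hnN x)) p i := by
  obtain ⟨hi, hmin⟩ := uniqueMinAt_ofFn_iff.1 h
  refine ⟨by omega, fun j hj => ?_⟩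
  rw [window_castLE hnN s (by omega), window_castLE hnN s hj]
  rcases eq_or_ne j i with rfl | hji
  · exact le_rfl
  · exact window_le_window_of_lt (hmin j (by omega) hji)

theorem IsMinWindow.hasDisjointTie_or_hasPeriodicTie_of_lt (h : IsMinWindow s p i) {j : ℕ}
    (hij : i < j) (hj : j + p ≤ n) (htie : window s p j = window s p i) :
    HasDisjointTie s p i ∨ ∃ d ∈ Icc 1 (p - 1), HasPeriodicTie s p d i := by
  have hex : ∃ j, i < j ∧ j + p ≤ n ∧ window s p j = window s p i := ⟨j, hij, hj, htie⟩
  obtain ⟨hij₀, hj₀, htie₀⟩ := Nat.find_spec hex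
  by_cases hdisj : i + p ≤ Nat.find hex
  · exact .inl ⟨h, _, hj₀, .inr hdisj, htie₀⟩
  refine .inr ⟨Nat.find hex - i, mem_Icc.2 ⟨by omega, by omega⟩, by omega,
    by rwa [Nat.add_sub_cancel' hij₀.le], fun e he hed => ?_⟩
  exact (h.2 _ (by omega)).lt_of_ne fun heq =>
    Nat.find_min hex (show i + e < Nat.find hex by omega) ⟨by omega, by omega, heq.symm⟩

theorem IsMinWindow.hasDisjointTie_or_hasPeriodicTie_of_gt (h : IsMinWindow s p i) {j : ℕ}
    (hji : j < i) (htie : window s p j = window s p i) :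
    HasDisjointTie s p i ∨ ∃ d ∈ Icc 1 (p - 1), HasPeriodicTie s p d (i - d) := by
  let P j := j < i ∧ window s p j = window s p i
  obtain ⟨hj₀i, htie₀⟩ : P (Nat.findGreatest P i) := Nat.findGreatest_spec hji.le ⟨hji, htie⟩
  set j₀ := Nat.findGreatest P i
  have hi := h.1
  by_cases hdisj : j₀ + p ≤ i
  · exact .inl ⟨h, j₀, by omega, .inl hdisj, htie₀⟩
  refine .inr ⟨i - j₀, mem_Icc.2 ⟨by omega, by omega⟩, ?_⟩
  rw [Nat.sub_sub_self hj₀i.le]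
  refine ⟨by omega, by rw [Nat.add_sub_cancel' hj₀i.le, htie₀], fun e he hed => ?_⟩
  rw [htie₀]
  exact (h.2 _ (by omega)).lt_of_ne fun heq =>
    Nat.findGreatest_is_greatest (show j₀ < j₀ + e by omega) (by omega) ⟨by omega, heq.symm⟩

theorem HasDisjointTie.window_eq_of_agree_outside {s' : Fin n → α} (hs : HasDisjointTie s p i)
    (hs' : HasDisjointTie s' p i) (hout : ∀ x : Fin n, (x : ℕ) < i ∨ i + p ≤ x → s x = s' x) :
    window s p i = window s' p i := by
  have hdisj (j : ℕ) (hj : j + p ≤ n) (hji : j + p ≤ i ∨ i + p ≤ j) :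
      window s p j = window s' p j :=
    window_eq_window_iff.2 fun t ht =>
      hout _ (by rw [Fin.val_natCast, Nat.mod_eq_of_lt (by omega)]; omega)
  obtain ⟨hmin, j, hj, hji, htie⟩ := hs
  obtain ⟨hmin', j', hj', hji', htie'⟩ := hs'
  refine le_antisymm ?_ ?_
  · calc window s p i ≤ window s p j' := hmin.2 j' hj'
      _ = window s' p i := (hdisj j' hj' hji').trans htie'
  · calc window s' p i ≤ window s' p j := hmin'.2 j hj
      _ = window s p i := (hdisj j hj hji).symm.trans htie

end MinWindow

section Periodic

variable {n d : ℕ} [NeZero n] [NeZero d]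

def factor (s : Fin n → α) (i d : ℕ) : Fin d → α := fun z => s ↑(i + z : ℕ)

theorem apply_eq_factor_of_window_eq {s : Fin n → α} {p i : ℕ}
    (h : window s p (i + d) = window s p i) : ∀ t < d + p, s ↑(i + t) = factor s i d ↑t := by
  intro t
  induction t using Nat.strong_induction_on with
  | _ t ih =>
    intro ht
    have hd := NeZero.pos d
    rcases lt_or_ge t d with htd | htd
    · simp only [factor, Fin.val_natCast, Nat.mod_eq_of_lt htd]
    obtain ⟨u, rfl⟩ := Nat.exists_eq_add_of_le htd
    rw [← add_assoc, window_eq_window_iff.1 h u (by omega), ih u (by omega) (by omega)]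
    congr 1
    exact Fin.ext (by simp only [Fin.val_natCast, Nat.add_mod_left])

theorem window_factor {s : Fin n → α} {p i : ℕ} (h : window s p (i + d) = window s p i) {e : ℕ}
    (he : e < d) : window (factor s i d) p e = window s p (i + e) :=
  window_eq_window_iff.2 fun t ht => by
    rw [add_assoc, apply_eq_factor_of_window_eq h _ (by omega)]

theorem window_comp_add_right (w : Fin d → α) (c : Fin d) (p e : ℕ) :
    window (fun z => w (z + c)) p e = window w p ((c : ℕ) + e) :=
  window_eq_window_iff.2 fun t _ => congrArg w (by push_cast [Fin.cast_val_eq_self]; abel)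

variable [LinearOrder α] [Fintype α]

def rotMinWords (p d : ℕ) [NeZero d] : Finset (Fin d → α) :=
  univ.filter fun w => ∀ c : Fin d, c ≠ 0 → window w p 0 < window (fun z => w (z + c)) p 0

theorem eq_zero_of_comp_add_right_mem_rotMinWords {p : ℕ} {w : Fin d → α} {c : Fin d}
    (hw : w ∈ rotMinWords p d) (hwc : (fun z => w (z + c)) ∈ rotMinWords p d) : c = 0 := by
  by_contra hc
  simp only [rotMinWords, mem_filter, mem_univ, true_and] at hw hwc
  have h := hwc (-c) (neg_ne_zero.2 hc)
  simp only [neg_add_cancel_right] at h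
  exact lt_asymm (hw c hc) h

theorem card_rotMinWords_mul_le (p d : ℕ) [NeZero d] :
    #(rotMinWords (α := α) p d) * d ≤ Fintype.card α ^ d := by
  calc #(rotMinWords (α := α) p d) * d = #(rotMinWords p d ×ˢ (univ : Finset (Fin d))) := by simp
    _ ≤ #(univ : Finset (Fin d → α)) :=
      card_le_card_of_injOn (fun wc => fun z => wc.1 (z + wc.2)) (by simp) ?_
    _ = _ := by simp
  rintro ⟨w, c⟩ hw ⟨w', c'⟩ hw' heq
  simp only [coe_product, Set.mem_prod, mem_coe, mem_univ, and_true] at hw hw' heq ⊢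
  have hw'w : w' = fun z => w (z + (c - c')) := funext fun z => by
    have := congrFun heq (z - c')
    simp only [sub_add_cancel] at this
    rw [← this]
    congr 1
    abel
  obtain rfl : c = c' := sub_eq_zero.1 (eq_zero_of_comp_add_right_mem_rotMinWords hw (hw'w ▸ hw'))
  simpa using hw'w.symm

end Periodic

theorem harmonic_pred_le_half : ∀ p : ℕ, harmonic (p - 1) ≤ p / 2
  | 0 | 1 => by norm_num
  | 2 => by norm_num [harmonic]
  | p + 3 => by
    have ih := harmonic_pred_le_half (p + 2)
    have hinv : ((p + 1 + 1 : ℕ) : ℚ)⁻¹ ≤ 1 / 2 := by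
      rw [one_div, inv_le_inv₀ (by positivity) (by norm_num)]
      norm_cast
      omega
    rw [show p + 3 - 1 = p + 1 + 1 from rfl, harmonic_succ]
    simp only [show p + 2 - 1 = p + 1 from rfl] at ih
    push_cast at ih hinv ⊢
    linarith

section Counting

variable [Fintype α] {n : ℕ} [NeZero n]

theorem card_le_of_window_determined {β : Type*} {S : Finset (Fin n → α)} {K : Finset β}
    {i m : ℕ} (hm : i + m ≤ n) (g : (Fin n → α) → β) (hgK : ∀ s ∈ S, g s ∈ K)
    (hdet : ∀ s ∈ S, ∀ s' ∈ S, g s = g s' →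
      (∀ x : Fin n, (x : ℕ) < i ∨ i + m ≤ x → s x = s' x) → window s m i = window s' m i) :
    #S ≤ #K * Fintype.card α ^ (n - m) := by
  calc #S ≤ #(K ×ˢ (univ : Finset (Fin i → α)) ×ˢ (univ : Finset (Fin (n - (i + m)) → α))) :=
        card_le_card_of_injOn (fun s => (g s, fun r => s ↑(r : ℕ), fun r => s ↑(i + m + r)))
          (fun s hs => by simp [hgK s hs]) ?_
    _ = #K * Fintype.card α ^ (n - m) := by
        simp only [card_product, card_univ, Fintype.card_fun, Fintype.card_fin, ← pow_add]
        rw [show i + (n - (i + m)) = n - m by omega]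
  intro s hs s' hs' heq
  simp only [Prod.mk.injEq, funext_iff] at heq
  obtain ⟨hg, hpre, hsuf⟩ := heq
  have hout : ∀ x : Fin n, (x : ℕ) < i ∨ i + m ≤ x → s x = s' x := by
    rintro x (hx | hx)
    · simpa only [Fin.cast_val_eq_self] using hpre ⟨x, hx⟩
    · have := hsuf ⟨x - (i + m), by omega⟩
      rwa [Nat.add_sub_cancel' hx, Fin.cast_val_eq_self] at this
  funext x
  by_cases hx : (x : ℕ) < i ∨ i + m ≤ x
  · exact hout x hx
  · have := window_eq_window_iff.1 (hdet s hs s' hs' hg hout) (x - i) (by omega)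
    rwa [Nat.add_sub_cancel' (by omega), Fin.cast_val_eq_self] at this

variable [LinearOrder α]

theorem card_hasDisjointTie_le (p i : ℕ) :
    #{s : Fin n → α | HasDisjointTie s p i} ≤ Fintype.card α ^ (n - p) := by
  rcases ({s : Fin n → α | HasDisjointTie s p i} : Finset _).eq_empty_or_nonempty
    with h | ⟨s₀, hs₀⟩
  · simp [h]
  simpa using card_le_of_window_determined (K := (univ : Finset Unit))
    (mem_filter.1 hs₀).2.1.1 (fun _ => ()) (by simp) fun s hs s' hs' _ hout =>
      (mem_filter.1 hs).2.window_eq_of_agree_outside (mem_filter.1 hs').2 hout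

theorem HasPeriodicTie.factor_mem_rotMinWords {s : Fin n → α} {p d i : ℕ} [NeZero d]
    (h : HasPeriodicTie s p d i) : factor s i d ∈ rotMinWords p d := by
  obtain ⟨-, hper, hlt⟩ := h
  simp only [rotMinWords, mem_filter, mem_univ, true_and]
  intro c hc
  rw [window_comp_add_right, add_zero, window_factor hper c.isLt,
    window_factor hper (NeZero.pos d), add_zero]
  exact hlt c (Nat.pos_of_ne_zero (Fin.val_ne_zero_iff.2 hc)) c.isLt

theorem card_hasPeriodicTie_mul_le (p d i : ℕ) [NeZero d] :
    #{s : Fin n → α | HasPeriodicTie s p d i} * d ≤ Fintype.card α ^ (n - p) := by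
  rcases ({s : Fin n → α | HasPeriodicTie s p d i} : Finset _).eq_empty_or_nonempty
    with h | ⟨s₀, hs₀⟩
  · simp [h]
  have hcard := card_le_of_window_determined (S := {s : Fin n → α | HasPeriodicTie s p d i})
    (K := rotMinWords p d)
    (show i + (d + p) ≤ n by have := (mem_filter.1 hs₀).2.1; omega) (factor · i d)
    (fun s hs => (mem_filter.1 hs).2.factor_mem_rotMinWords) fun s hs s' hs' hg _ =>
      window_eq_window_iff.2 fun t ht => by
        rw [apply_eq_factor_of_window_eq (mem_filter.1 hs).2.2.1 t ht,
          apply_eq_factor_of_window_eq (mem_filter.1 hs').2.2.1 t ht, hg]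
  calc _ ≤ #(rotMinWords (α := α) p d) * Fintype.card α ^ (n - (d + p)) * d :=
        Nat.mul_le_mul_right d hcard
    _ = #(rotMinWords (α := α) p d) * d * Fintype.card α ^ (n - (d + p)) := by ring
    _ ≤ Fintype.card α ^ d * Fintype.card α ^ (n - (d + p)) :=
        Nat.mul_le_mul_right _ (card_rotMinWords_mul_le p d)
    _ = Fintype.card α ^ (n - p) := by
        rw [← pow_add]
        have := (mem_filter.1 hs₀).2.1
        congr 1
        omega

/-- The factor `2` keeps the bound `(1 + p / 2) * card α ^ (n - p)` in `ℕ`. -/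
theorem two_mul_card_le_of_hasDisjointTie_or_hasPeriodicTie {S : Finset (Fin n → α)} (p i : ℕ)
    (start : ℕ → ℕ)
    (hS : ∀ s ∈ S, HasDisjointTie s p i ∨ ∃ d ∈ Icc 1 (p - 1), HasPeriodicTie s p d (start d)) :
    2 * #S ≤ (p + 2) * Fintype.card α ^ (n - p) := by
  have hper : ∀ d ∈ Icc 1 (p - 1), (#{s : Fin n → α | HasPeriodicTie s p d (start d)} : ℚ)
      ≤ Fintype.card α ^ (n - p) * (d : ℚ)⁻¹ := by
    intro d hd
    have : NeZero d := ⟨by have := (mem_Icc.1 hd).1; omega⟩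
    rw [le_mul_inv_iff₀ (Nat.cast_pos.2 (NeZero.pos d))]
    exact_mod_cast card_hasPeriodicTie_mul_le p d (start d)
  suffices h : (#S : ℚ) ≤ (1 + p / 2) * Fintype.card α ^ (n - p) by
    rw [← Nat.cast_le (α := ℚ)]
    push_cast
    linarith
  calc (#S : ℚ) ≤ #{s : Fin n → α | HasDisjointTie s p i}
        + ∑ d ∈ Icc 1 (p - 1), (#{s : Fin n → α | HasPeriodicTie s p d (start d)} : ℚ) := by
        norm_cast
        refine (card_le_card fun s hs => ?_).trans
          ((card_union_le _ _).trans (add_le_add le_rfl card_biUnion_le))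
        simpa only [mem_filter, mem_union, mem_biUnion, mem_univ, true_and] using hS s hs
    _ ≤ Fintype.card α ^ (n - p) + ∑ d ∈ Icc 1 (p - 1), Fintype.card α ^ (n - p) * (d : ℚ)⁻¹ := by
        gcongr with d hd
        · exact_mod_cast card_hasDisjointTie_le p i
        · exact hper d hd
    _ = (1 + harmonic (p - 1)) * Fintype.card α ^ (n - p) := by
        rw [← mul_sum, harmonic_eq_sum_Icc]
        ring
    _ ≤ (1 + p / 2) * Fintype.card α ^ (n - p) := by
        gcongr
        exact harmonic_pred_le_half p

theorem card_isMinWindow_ends_le (p : ℕ) :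
    #{s : Fin n → α | IsMinWindow s p 0 ∨ IsMinWindow s p (n - p)}
      ≤ #{s : Fin n → α | uniqueMinAt (List.ofFn s) p 0 ∨ uniqueMinAt (List.ofFn s) p (n - p)}
        + (p + 2) * Fintype.card α ^ (n - p) := by
  set M : Finset (Fin n → α) := {s | IsMinWindow s p 0 ∨ IsMinWindow s p (n - p)}
  set U : Finset (Fin n → α) :=
    {s | uniqueMinAt (List.ofFn s) p 0 ∨ uniqueMinAt (List.ofFn s) p (n - p)}
  set T₀ : Finset (Fin n → α) := {s | IsMinWindow s p 0 ∧ ¬uniqueMinAt (List.ofFn s) p 0}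
  set T₁ : Finset (Fin n → α) :=
    {s | IsMinWindow s p (n - p) ∧ ¬uniqueMinAt (List.ofFn s) p (n - p)}
  have hsub : M ⊆ U ∪ T₀ ∪ T₁ := by
    intro s
    simp only [M, U, T₀, T₁, mem_filter, mem_union, mem_univ, true_and]
    tauto
  have hT₀ := two_mul_card_le_of_hasDisjointTie_or_hasPeriodicTie (S := T₀) p 0 (fun _ => 0)
    fun s hs => by
      obtain ⟨h, hu⟩ := (mem_filter.1 hs).2
      obtain ⟨j, hj, hj0, htie⟩ := h.uniqueMinAt_or_exists_tie.resolve_left hu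
      exact h.hasDisjointTie_or_hasPeriodicTie_of_lt (Nat.pos_of_ne_zero hj0) hj htie
  have hT₁ := two_mul_card_le_of_hasDisjointTie_or_hasPeriodicTie (S := T₁) p (n - p) (n - p - ·)
    fun s hs => by
      obtain ⟨h, hu⟩ := (mem_filter.1 hs).2
      obtain ⟨j, hj, hjl, htie⟩ := h.uniqueMinAt_or_exists_tie.resolve_left hu
      exact h.hasDisjointTie_or_hasPeriodicTie_of_gt (by omega) htie
  have hcard := (card_le_card hsub).trans
    ((card_union_le _ _).trans (Nat.add_le_add_right (card_union_le _ _) _))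
  linarith

theorem card_uniqueMinAt_ends_le {N : ℕ} [NeZero N] (p a : ℕ) (hN : n + a = N) :
    #{s : Fin N → α |
        uniqueMinAt (List.ofFn s) (p + a) 0 ∨ uniqueMinAt (List.ofFn s) (p + a) (N - (p + a))}
      ≤ #{s : Fin n → α | IsMinWindow s p 0 ∨ IsMinWindow s p (n - p)} * Fintype.card α ^ a := by
  have hnN : n ≤ N := by omega
  calc _ ≤ #(({s : Fin n → α | IsMinWindow s p 0 ∨ IsMinWindow s p (n - p)} : Finset _) ×ˢ
          (univ : Finset (Fin a → α))) :=
        card_le_card_of_injOn (fun s => (fun x => s (Fin.castLE hnN x), fun r => s ↑(n + r : ℕ)))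
          ?_ ?_
    _ = _ := by simp [card_product]
  · intro s hs
    simp only [coe_filter, Set.mem_ofPred_eq, mem_coe, mem_product, mem_filter, mem_univ,
      true_and, and_true] at hs ⊢
    rw [show a = N - n by omega, show N - (p + (N - n)) = n - p by omega] at hs
    exact hs.imp (IsMinWindow.of_uniqueMinAt_castLE hnN) (IsMinWindow.of_uniqueMinAt_castLE hnN)
  · intro s _ s' _ heq
    obtain ⟨hpre, hsuf⟩ := Prod.mk.inj heq
    funext x
    by_cases hx : (x : ℕ) < n
    · exact congrFun hpre ⟨x, hx⟩
    · have := congrFun hsuf ⟨x - n, by omega⟩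
      rwa [Nat.add_sub_cancel' (by omega), Fin.cast_val_eq_self] at this

end Counting

theorem P1_add_le (k p a : ℕ) (hpk : p ≤ k + 1) :
    P1 (k + a) (p + a) ≤ P1 k p + ((p : ℚ) + 2) / 4 ^ p := by
  have hproj := card_uniqueMinAt_ends_le (α := Fin 4) (n := k + 1) (N := k + a + 1) p a (by omega)
  have hends := card_isMinWindow_ends_le (α := Fin 4) (n := k + 1) p
  simp only [Fintype.card_fin] at hproj hends
  unfold P1
  generalize #{s : Fin (k + 1) → Fin 4 | IsMinWindow s p 0 ∨ IsMinWindow s p (k + 1 - p)} = M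
    at hproj hends
  generalize #{s : Fin (k + 1) → Fin 4 |
    uniqueMinAt (List.ofFn s) p 0 ∨ uniqueMinAt (List.ofFn s) p (k + 1 - p)} = S at hends ⊢
  generalize #{s : Fin (k + a + 1) → Fin 4 | uniqueMinAt (List.ofFn s) (p + a) 0 ∨
    uniqueMinAt (List.ofFn s) (p + a) (k + a + 1 - (p + a))} = B at hproj ⊢
  have hsplit : (4 : ℚ) ^ (k + 1) = 4 ^ (k + 1 - p) * 4 ^ p := by
    rw [← pow_add, Nat.sub_add_cancel hpk]
  calc (B : ℚ) / 4 ^ (k + a + 1) ≤ (M * 4 ^ a) / (4 ^ (k + 1) * 4 ^ a) := by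
        rw [← pow_add, add_right_comm]
        gcongr
        exact_mod_cast hproj
    _ = M / 4 ^ (k + 1) := by field_simp
    _ ≤ (S + (p + 2) * 4 ^ (k + 1 - p)) / 4 ^ (k + 1) := by gcongr; exact_mod_cast hends
    _ = S / 4 ^ (k + 1) + (p + 2) / 4 ^ p := by rw [hsplit]; field_simp

theorem stmt4_general (k p a : ℕ) (hpk : p ≤ k) :
    P1 (k + a) (p + a) ≤ 2 * P1 k p + ((p : ℚ) + 2) / 4 ^ p := by
  have hP1 : 0 ≤ P1 k p := by unfold P1; positivity
  linarith [P1_add_le k p a (by omega)]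

/-- for any integer `a > 0`, `P₁(k+a, p+a) ≤ 2·P₁(k,p) + (p+2)/4^p`. -/
theorem stmt4 (k p a : ℕ) (hp : 0 < p) (hpk : p ≤ k) (ha : 0 < a) :
    P1 (k + a) (p + a) ≤ 2 * P1 k p + ((p : ℚ) + 2) / 4 ^ p :=
  stmt4_general k p a hpk
end

section
/- With notation as above, P_1(k+a, p+a) ≤ P_2(k,p) for every integer a > 0; that is, if a string of length k+a+1 has its first or last (p+a)-substring as the unique minimum (p+a)-substring, then its length-(k+1) prefix has its first or last p-substring among the minimum p-substrings. -/
open scoped Classical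

/-- The `p`-substring at position `i` is a (not necessarily unique) minimum `p`-substring. -/
def minAt {α : Type*} [LinearOrder α] (s : List α) (p i : ℕ) : Prop :=
  i + p ≤ s.length ∧ ∀ j, j + p ≤ s.length → substr s i p ≤ substr s j p

/-- `P₂(k,p) = |S*_{k,p}|/4^{k+1}`. -/
noncomputable def P2 (k p : ℕ) : ℚ :=
  ((Finset.univ.filter fun s : Fin (k + 1) → Fin 4 =>
    minAt (List.ofFn s) p 0 ∨ minAt (List.ofFn s) p (k + 1 - p)).card : ℚ)
    / 4 ^ (k + 1)

/-! Truncation to the first `p` letters is monotone for the lexicographic order, and each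
`p`-window of the length-`(k+1)` prefix is the truncation of the `(p+a)`-window of the whole string
at the same position; the last windows match because `k+a+1-(p+a) = k+1-p`. So a minimum end
`(p+a)`-window yields a minimum end `p`-window of the prefix, and as each prefix has `4^a`
extensions, `P₁(k+a, p+a) ≤ P₂(k, p)`. -/

namespace List

theorem take_le_take_of_le {α : Type*} [LinearOrder α] {u v : List α} (h : u ≤ v) (n : ℕ) :
    u.take n ≤ v.take n := by
  suffices ∀ {u v : List α}, Lex (· < ·) u v → ∀ n, u.take n ≤ v.take n by
    rcases h.lt_or_eq with h | rfl
    exacts [this h n, le_rfl]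
  intro u v h
  induction h with
  | nil => rintro (_ | n); exacts [le_rfl, le_of_lt (Lex.nil : Lex (· < ·) [] _)]
  | cons _ ih => rintro (_ | n); exacts [le_rfl, cons_le_cons _ (ih n)]
  | rel hab => rintro (_ | n); exacts [le_rfl, le_of_lt (Lex.rel hab : Lex (· < ·) _ _)]

end List

section Windows

variable {α : Type*}

theorem substr_take_of_add_le (s : List α) {i p m : ℕ} (h : i + p ≤ m) :
    substr (s.take m) i p = substr s i p := by
  rw [substr, substr, List.drop_take, List.take_take, min_eq_left (by omega)]

theorem take_substr_of_le (s : List α) (i : ℕ) {p q : ℕ} (h : p ≤ q) :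
    (substr s i q).take p = substr s i p := by
  rw [substr, substr, List.take_take, min_eq_left h]

variable [LinearOrder α]

theorem uniqueMinAt.minAt {s : List α} {p i : ℕ} (h : uniqueMinAt s p i) : minAt s p i := by
  refine ⟨h.1, fun j hj => ?_⟩
  rcases eq_or_ne j i with rfl | hji
  · exact le_rfl
  · exact (h.2 j hj hji).le

theorem minAt.take {s : List α} {p q i m : ℕ} (h : minAt s q i) (hpq : p ≤ q) (him : i + p ≤ m)
    (hm : m + q ≤ s.length + p) : minAt (s.take m) p i := by
  have hi := h.1
  refine ⟨by simp; omega, fun j hj => ?_⟩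
  have hjm : j + p ≤ m := by simp at hj; omega
  rw [substr_take_of_add_le s him, substr_take_of_add_le s hjm, ← take_substr_of_le s i hpq,
    ← take_substr_of_le s j hpq]
  exact List.take_le_take_of_le (h.2 j (by omega)) p

theorem minAt_take_ends {s : List α} {p a m : ℕ} (hs : s.length = m + a)
    (h : minAt s (p + a) 0 ∨ minAt s (p + a) (s.length - (p + a))) :
    minAt (s.take m) p 0 ∨ minAt (s.take m) p (m - p) := by
  rcases h with h | h
  · exact .inl (h.take (by omega) (by have := h.1; omega) (by omega))
  · have hlast : s.length - (p + a) = m - p := by have := h.1; omega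
    rw [hlast] at h
    exact .inr (h.take (by omega) (by have := h.1; omega) (by omega))

end Windows

open Finset in
theorem card_filter_le_pow_mul_card_filter_take {β : Type*} [Fintype β] {m n : ℕ} (h : m ≤ n)
    {Q : (Fin n → β) → Prop} {R : (Fin m → β) → Prop} [DecidablePred Q] [DecidablePred R]
    (hQR : ∀ t, Q t → R (Fin.take m h t)) :
    #{t | Q t} ≤ Fintype.card β ^ (n - m) * #{s | R s} := by
  let split (t : Fin n → β) : (Fin m → β) × (Fin (n - m) → β) :=
    (Fin.take m h t, fun j => t ⟨m + j, by omega⟩)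
  calc #{t | Q t} ≤ #((filter R univ) ×ˢ (univ : Finset (Fin (n - m) → β))) := by
        refine card_le_card_of_injOn split (fun t ht => ?_) (fun t₁ _ t₂ _ heq => ?_)
        · simpa [split] using hQR t (mem_filter.1 ht).2
        · simp only [split, Prod.mk.injEq] at heq
          funext i
          rcases lt_or_ge i.val m with hi | hi
          · simpa using congrFun heq.1 ⟨i, hi⟩
          · simpa [Nat.add_sub_cancel' hi] using congrFun heq.2 ⟨i - m, by omega⟩
    _ = Fintype.card β ^ (n - m) * #{s | R s} := by
        rw [card_product, card_univ, Fintype.card_fun, Fintype.card_fin, mul_comm]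

theorem stmt5_general (k p a : ℕ) :
    P1 (k + a) (p + a) ≤ P2 k p ∧
    ∀ t : Fin (k + a + 1) → Fin 4,
      (uniqueMinAt (List.ofFn t) (p + a) 0 ∨
        uniqueMinAt (List.ofFn t) (p + a) (k + a + 1 - (p + a))) →
      (minAt ((List.ofFn t).take (k + 1)) p 0 ∨
        minAt ((List.ofFn t).take (k + 1)) p (k + 1 - p)) := by
  have prefix_minAt : ∀ t : Fin (k + a + 1) → Fin 4,
      (uniqueMinAt (List.ofFn t) (p + a) 0 ∨
        uniqueMinAt (List.ofFn t) (p + a) (k + a + 1 - (p + a))) →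
      (minAt ((List.ofFn t).take (k + 1)) p 0 ∨
        minAt ((List.ofFn t).take (k + 1)) p (k + 1 - p)) := fun t H =>
    minAt_take_ends (p := p) (a := a) (m := k + 1) (by simp; omega)
      (by simpa only [List.length_ofFn] using H.imp uniqueMinAt.minAt uniqueMinAt.minAt)
  refine ⟨?_, prefix_minAt⟩
  have hcard := card_filter_le_pow_mul_card_filter_take (by omega : k + 1 ≤ k + a + 1)
    (Q := fun t : Fin (k + a + 1) → Fin 4 => uniqueMinAt (List.ofFn t) (p + a) 0 ∨
      uniqueMinAt (List.ofFn t) (p + a) (k + a + 1 - (p + a)))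
    (R := fun s => minAt (List.ofFn s) p 0 ∨ minAt (List.ofFn s) p (k + 1 - p))
    (fun t ht => by simpa only [Fin.ofFn_take_eq_take_ofFn] using prefix_minAt t ht)
  rw [Fintype.card_fin, show k + a + 1 - (k + 1) = a by omega] at hcard
  unfold P1 P2
  rw [show (4 : ℚ) ^ (k + a + 1) = 4 ^ a * 4 ^ (k + 1) by ring, ← div_div,
    div_le_div_iff_of_pos_right (by positivity), div_le_iff₀ (by positivity), mul_comm]
  exact_mod_cast hcard

/-- `P₁(k+a, p+a) ≤ P₂(k,p)` for every integer `a > 0`; moreover if a string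
of length `k+a+1` has its first or last `(p+a)`-substring as the unique minimum, then its
length-(k+1) prefix has its first or last `p`-substring among the minimum `p`-substrings. -/
theorem stmt5 (k p a : ℕ) (hp : 0 < p) (hpk : p ≤ k) (ha : 0 < a) :
    P1 (k + a) (p + a) ≤ P2 k p ∧
    ∀ t : Fin (k + a + 1) → Fin 4,
      (uniqueMinAt (List.ofFn t) (p + a) 0 ∨
        uniqueMinAt (List.ofFn t) (p + a) (k + a + 1 - (p + a))) →
      (minAt ((List.ofFn t).take (k + 1)) p 0 ∨
        minAt ((List.ofFn t).take (k + 1)) p (k + 1 - p)) :=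
  stmt5_general k p a
end

section
/- In the random string model over {0,1,2,3} with uniform symbols, assuming k = m/2, k < 100, and p < k/5 (with p > 4), the expected total minimum-substring-partition size (kl/m)n + n of a dataset of n/m reads each of length m is less than 8.4n, where l = P_1(k,p)(m-k) is the expected number of breaks per read. -/
open scoped Classical

/-!
Place `t + 1` pairwise disjoint windows of length `q ≤ p` in the string, one of them starting
where the first (resp. last) `p`-substring starts. If that `p`-substring is the unique minimum, its
`q`-prefix is at most every other window, so either it is the strict minimum among the windows or
it equals one of the other `t` windows. Exchanging two windows is a bijection of the strings,
so each window is equally likely to be the strict minimum, which has probability at most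
`1/(t+1)`; each tie has probability `4^{-q}`. Hence `P₁(k,p) ≤ 2 (1/(t+1) + t/4^q)` with
`t = ⌊(k+1-p)/q⌋`, and a finite check over `k < 100` with `q ∈ {5, 6}` gives `k P₁(k,p) < 14.8`.
As `m = 2k`, the partition size is `(k P₁(k,p)/2) n + n < 8.4 n`.
-/

open Finset

theorem List.take_le_take_of_lt {α : Type*} [LinearOrder α] {l₁ l₂ : List α} (h : l₁ < l₂)
    (q : ℕ) : l₁.take q ≤ l₂.take q := by
  induction h generalizing q with
  | nil => cases q <;> simp; exact le_of_lt List.Lex.nil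
  | cons _ ih => cases q <;> simp [List.cons_le_cons _ (ih _)]
  | rel h => cases q <;> simp; exact le_of_lt (List.Lex.rel h)

section Substr

variable {α : Type*}

theorem take_substr (L : List α) (i : ℕ) {p q : ℕ} (hqp : q ≤ p) :
    (substr L i p).take q = substr L i q := by
  simp [substr, List.take_take, min_eq_left hqp]

theorem substr_ofFn_s11 {N : ℕ} (s : Fin N → α) {i q : ℕ} (h : i + q ≤ N) :
    substr (List.ofFn s) i q = List.ofFn fun r : Fin q => s ⟨i + r, by omega⟩ := by
  apply List.ext_getElem
  · simp [substr]; omega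
  · intro r _ _
    simp only [substr, List.getElem_take, List.getElem_drop, List.getElem_ofFn]

end Substr

def DisjointWindows {ι : Type*} (q : ℕ) (d : ι → ℕ) : Prop :=
  Pairwise fun i j => d i + q ≤ d j ∨ d j + q ≤ d i

def swapWindows (q a b x : ℕ) : ℕ :=
  if a ≤ x ∧ x < a + q then b + (x - a) else if b ≤ x ∧ x < b + q then a + (x - b) else x

section SwapWindows

variable {q a b : ℕ}

theorem swapWindows_involutive (hab : a + q ≤ b ∨ b + q ≤ a) :
    Function.Involutive (swapWindows q a b) := by
  intro x
  unfold swapWindows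
  split_ifs <;> omega

theorem swapWindows_lt {N x : ℕ} (ha : a + q ≤ N) (hb : b + q ≤ N) (hx : x < N) :
    swapWindows q a b x < N := by
  unfold swapWindows
  split_ifs <;> omega

theorem swapWindows_apply_add {ι : Type*} [DecidableEq ι] {d : ι → ℕ}
    (hd : DisjointWindows q d) (i₀ c i : ι) {r : ℕ} (hr : r < q) :
    swapWindows q (d i₀) (d c) (d i + r) = d (Equiv.swap i₀ c i) + r := by
  unfold swapWindows
  rcases eq_or_ne i i₀ with rfl | hi₀
  · rw [Equiv.swap_apply_left, if_pos (by omega)]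
    omega
  rcases eq_or_ne i c with rfl | hic
  · have := hd hi₀
    rw [Equiv.swap_apply_right, if_neg (by omega), if_pos (by omega)]
    omega
  · have := hd hi₀
    have := hd hic
    rw [Equiv.swap_apply_of_ne_of_ne hi₀ hic, if_neg (by omega), if_neg (by omega)]

end SwapWindows

noncomputable def minWindowSet (α : Type*) {ι : Type*} [Fintype α] [LinearOrder α] (N q : ℕ)
    (d : ι → ℕ) (i : ι) : Finset (Fin N → α) :=
  {s | ∀ j ≠ i, substr (List.ofFn s) (d i) q < substr (List.ofFn s) (d j) q}

section Windows

variable {α ι : Type*} {N q : ℕ} {d : ι → ℕ}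

def swapWindowsFn (hN : ∀ i, d i + q ≤ N) (i₀ c : ι) (s : Fin N → α) : Fin N → α :=
  fun x => s ⟨swapWindows q (d i₀) (d c) x, swapWindows_lt (hN i₀) (hN c) x.2⟩

theorem substr_swapWindowsFn [DecidableEq ι] (hd : DisjointWindows q d)
    (hN : ∀ i, d i + q ≤ N) (i₀ c : ι) (s : Fin N → α) (i : ι) :
    substr (List.ofFn (swapWindowsFn hN i₀ c s)) (d i) q
      = substr (List.ofFn s) (d (Equiv.swap i₀ c i)) q := by
  rw [substr_ofFn_s11 _ (hN i), substr_ofFn_s11 _ (hN _)]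
  congr 1
  funext r
  exact congrArg s (Fin.ext (swapWindows_apply_add hd i₀ c i r.2))

theorem swapWindowsFn_involutive (hN : ∀ i, d i + q ≤ N) {i₀ c : ι}
    (h : d i₀ + q ≤ d c ∨ d c + q ≤ d i₀) :
    Function.Involutive (swapWindowsFn hN i₀ c : (Fin N → α) → Fin N → α) := by
  intro s
  funext x
  exact congrArg s (Fin.ext (swapWindows_involutive h x))

variable [DecidableEq ι] [Fintype α] [LinearOrder α]

theorem mem_minWindowSet_iff_swapWindowsFn (hd : DisjointWindows q d) (hN : ∀ i, d i + q ≤ N)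
    (i₀ c : ι) (s : Fin N → α) :
    s ∈ minWindowSet α N q d i₀ ↔ swapWindowsFn hN i₀ c s ∈ minWindowSet α N q d c := by
  simp only [minWindowSet, mem_filter, mem_univ, true_and, substr_swapWindowsFn hd,
    Equiv.swap_apply_right]
  constructor
  · intro h j hj
    exact h _ (by rwa [Ne, Equiv.swap_apply_eq_iff, Equiv.swap_apply_left])
  · intro h j hj
    simpa using h (Equiv.swap i₀ c j)
      (by rwa [Ne, Equiv.swap_apply_eq_iff, Equiv.swap_apply_right])

theorem card_minWindowSet_eq (hd : DisjointWindows q d) (hN : ∀ i, d i + q ≤ N) (i₀ c : ι) :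
    #(minWindowSet α N q d i₀) = #(minWindowSet α N q d c) := by
  rcases eq_or_ne i₀ c with rfl | hc
  · rfl
  have hσ := swapWindowsFn_involutive (α := α) hN (hd hc)
  refine card_nbij' (swapWindowsFn hN i₀ c) (swapWindowsFn hN i₀ c) ?_ ?_ ?_ ?_
  · exact fun s hs => (mem_minWindowSet_iff_swapWindowsFn hd hN i₀ c s).1 hs
  · intro s hs
    rwa [mem_coe, mem_minWindowSet_iff_swapWindowsFn hd hN i₀ c, hσ]
  · exact fun s _ => hσ s
  · exact fun s _ => hσ s

variable [Fintype ι]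

theorem card_mul_card_minWindowSet_le (hd : DisjointWindows q d) (hN : ∀ i, d i + q ≤ N)
    (i₀ : ι) : Fintype.card ι * #(minWindowSet α N q d i₀) ≤ Fintype.card α ^ N := by
  have hdisj : ((univ : Finset ι) : Set ι).PairwiseDisjoint (minWindowSet α N q d) := by
    intro i _ j _ hij
    refine disjoint_left.2 fun s hi hj => ?_
    simp only [minWindowSet, mem_filter, mem_univ, true_and] at hi hj
    exact (hi j hij.symm).asymm (hj i hij)
  calc Fintype.card ι * #(minWindowSet α N q d i₀)
      = ∑ i, #(minWindowSet α N q d i) := by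
        rw [sum_congr rfl fun i _ => (card_minWindowSet_eq hd hN i₀ i).symm, sum_const,
          card_univ, smul_eq_mul]
    _ = #(univ.biUnion (minWindowSet α N q d)) := (card_biUnion hdisj).symm
    _ ≤ Fintype.card α ^ N := by
        simpa using card_le_univ (univ.biUnion (minWindowSet α N q d))

end Windows

theorem uniqueMinAt.substr_le {α : Type*} [LinearOrder α] {L : List α} {p q i j : ℕ}
    (h : uniqueMinAt L p i) (hqp : q ≤ p) (hj : j + p ≤ L.length) (hji : j ≠ i) :
    substr L i q ≤ substr L j q := by
  simpa only [take_substr _ _ hqp] using List.take_le_take_of_lt (h.2 j hj hji) q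

section Counting

variable {α : Type*} [Fintype α] {N q : ℕ}

theorem card_filter_substr_eq_le [DecidableEq α] {a b : ℕ} (hab : a + q ≤ b ∨ b + q ≤ a)
    (ha : a + q ≤ N) (hb : b + q ≤ N) :
    #{s : Fin N → α | substr (List.ofFn s) b q = substr (List.ofFn s) a q}
      ≤ Fintype.card α ^ (N - q) := by
  let e : Fin q ↪ Fin N := (Fin.natAddEmb b).trans (Fin.castLEEmb hb)
  let B : Finset (Fin N) := univ.map e
  have hagree : ∀ s : Fin N → α, substr (List.ofFn s) b q = substr (List.ofFn s) a q →
      ∀ r : Fin q, s (e r) = s ⟨a + r, by omega⟩ := by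
    intro s hs r
    rw [substr_ofFn_s11 _ hb, substr_ofFn_s11 _ ha] at hs
    exact congrFun (List.ofFn_injective hs) r
  have hout : ∀ r : Fin q, (⟨a + r, by omega⟩ : Fin N) ∉ B := by
    simp only [B, mem_map, mem_univ, true_and, not_exists]
    intro r r' h
    have : b + r' = a + r := congrArg Fin.val h
    omega
  calc #{s : Fin N → α | substr (List.ofFn s) b q = substr (List.ofFn s) a q}
      ≤ #(univ : Finset ({x // x ∈ Bᶜ} → α)) := by
        refine card_le_card_of_injOn (fun s x => s x) (fun _ _ => mem_coe.2 (mem_univ _)) ?_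
        intro s hs s' hs' hss'
        simp only [coe_filter, mem_univ, true_and, Set.mem_ofPred_eq] at hs hs'
        funext x
        by_cases hx : x ∈ B
        · obtain ⟨r, -, rfl⟩ := mem_map.1 hx
          rw [hagree s hs, hagree s' hs']
          exact congrFun hss' ⟨_, mem_compl.2 (hout r)⟩
        · exact congrFun hss' ⟨x, mem_compl.2 hx⟩
    _ = Fintype.card α ^ (N - q) := by
        rw [card_univ, Fintype.card_fun, Fintype.card_coe, card_compl, card_map, card_univ,
          Fintype.card_fin, Fintype.card_fin]

variable [LinearOrder α] {ι : Type*} [Fintype ι] [DecidableEq ι] {p : ℕ} {d : ι → ℕ}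

theorem card_uniqueMinAt_le (hqp : q ≤ p) (hd : DisjointWindows q d) (hN : ∀ i, d i + p ≤ N)
    (i₀ : ι) :
    #{s : Fin N → α | uniqueMinAt (List.ofFn s) p (d i₀)}
      ≤ #(minWindowSet α N q d i₀) + (Fintype.card ι - 1) * Fintype.card α ^ (N - q) := by
  let tie : ι → Finset (Fin N → α) := fun j =>
    {s | substr (List.ofFn s) (d j) q = substr (List.ofFn s) (d i₀) q}
  have hsub : ({s | uniqueMinAt (List.ofFn s) p (d i₀)} : Finset (Fin N → α))
      ⊆ minWindowSet α N q d i₀ ∪ (univ.erase i₀).biUnion tie := by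
    intro s hs
    simp only [mem_filter, mem_univ, true_and] at hs
    by_cases htie : ∃ j ≠ i₀, substr (List.ofFn s) (d j) q = substr (List.ofFn s) (d i₀) q
    · obtain ⟨j, hj, hj_eq⟩ := htie
      exact mem_union_right _ (mem_biUnion.2 ⟨j, mem_erase.2 ⟨hj, mem_univ _⟩,
        mem_filter.2 ⟨mem_univ _, hj_eq⟩⟩)
    · push Not at htie
      refine mem_union_left _ ?_
      simp only [minWindowSet, mem_filter, mem_univ, true_and]
      intro j hj
      have hdj : d j ≠ d i₀ := fun h => htie j hj (by rw [h])
      exact (hs.substr_le hqp (by simpa using hN j) hdj).lt_of_ne (htie j hj).symm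
  calc _ ≤ #(minWindowSet α N q d i₀ ∪ (univ.erase i₀).biUnion tie) := card_le_card hsub
    _ ≤ #(minWindowSet α N q d i₀) + ∑ j ∈ univ.erase i₀, #(tie j) :=
        (card_union_le _ _).trans (Nat.add_le_add_left card_biUnion_le _)
    _ ≤ #(minWindowSet α N q d i₀) + ∑ _j ∈ univ.erase i₀, Fintype.card α ^ (N - q) := by
        gcongr with j hj
        have hj₀ := (mem_erase.1 hj).1
        exact card_filter_substr_eq_le (hd hj₀.symm) (by have := hN i₀; omega)
          (by have := hN j; omega)
    _ = _ := by simp [card_erase_of_mem]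

end Counting

theorem card_uniqueMinAt_div_le {α ι : Type*} [Fintype α] [Nonempty α] [LinearOrder α]
    [Fintype ι] [DecidableEq ι] {N p q : ℕ} {d : ι → ℕ} (hqp : q ≤ p)
    (hd : DisjointWindows q d) (hN : ∀ i, d i + p ≤ N) (i₀ : ι) :
    (#{s : Fin N → α | uniqueMinAt (List.ofFn s) p (d i₀)} : ℚ) / Fintype.card α ^ N
      ≤ 1 / Fintype.card ι + (Fintype.card ι - 1 : ℕ) / Fintype.card α ^ q := by
  have hqN : q ≤ N := by have := hN i₀; omega
  have hA := card_uniqueMinAt_le (α := α) hqp hd hN i₀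
  have hM := card_mul_card_minWindowSet_le (α := α) (N := N) hd
    (fun i => by have := hN i; omega) i₀
  have hι : (0 : ℚ) < Fintype.card ι := by exact_mod_cast Fintype.card_pos_iff.2 ⟨i₀⟩
  have hpow : (Fintype.card α : ℚ) ^ N = Fintype.card α ^ (N - q) * Fintype.card α ^ q := by
    rw [← pow_add, Nat.sub_add_cancel hqN]
  rw [div_le_iff₀ (by positivity)]
  calc (#{s : Fin N → α | uniqueMinAt (List.ofFn s) p (d i₀)} : ℚ)
      ≤ #(minWindowSet α N q d i₀) + (Fintype.card ι - 1 : ℕ) * Fintype.card α ^ (N - q) := by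
        exact_mod_cast hA
    _ ≤ Fintype.card α ^ N / Fintype.card ι
          + (Fintype.card ι - 1 : ℕ) * Fintype.card α ^ (N - q) := by
        gcongr
        rw [le_div_iff₀ hι, mul_comm]
        exact_mod_cast hM
    _ = _ := by rw [hpow]; field_simp

theorem disjointWindows_arith (r q t : ℕ) : DisjointWindows q fun b : Fin t => r + q * b := by
  intro i j hij
  rcases lt_or_gt_of_ne (Fin.val_ne_of_ne hij) with h | h
  · left; nlinarith
  · right; nlinarith

theorem P1_le {k p q : ℕ} (hqp : q ≤ p) (hpk : p ≤ k + 1) :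
    P1 k p ≤ 2 * (1 / (((k + 1 - p) / q + 1 : ℕ) : ℚ) + ((k + 1 - p) / q : ℕ) / 4 ^ q) := by
  set t := (k + 1 - p) / q
  have hfit : ∀ r, r + q * t ≤ k + 1 - p → ∀ b : Fin (t + 1), r + q * b + p ≤ k + 1 := by
    intro r hr b
    have := Nat.mul_le_mul_left q (Nat.le_of_lt_succ b.2)
    omega
  have hleft := card_uniqueMinAt_div_le (α := Fin 4) (N := k + 1) hqp
    (disjointWindows_arith 0 q (t + 1)) (hfit 0 (by simpa using Nat.mul_div_le _ _)) 0
  have hright := card_uniqueMinAt_div_le (α := Fin 4) (N := k + 1) hqp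
    (disjointWindows_arith ((k + 1 - p) % q) q (t + 1))
    (hfit _ (Nat.mod_add_div _ _).le) (Fin.last t)
  have hlast : (k + 1 - p) % q + q * t = k + 1 - p := Nat.mod_add_div _ _
  simp only [Fin.val_zero, Fin.val_last, mul_zero, add_zero, hlast, Fintype.card_fin,
    add_tsub_cancel_right, Nat.cast_ofNat] at hleft hright
  rw [P1, filter_or]
  calc _ ≤ ((#{s : Fin (k + 1) → Fin 4 | uniqueMinAt (List.ofFn s) p 0}
          + #{s : Fin (k + 1) → Fin 4 | uniqueMinAt (List.ofFn s) p (k + 1 - p)} : ℕ) : ℚ)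
          / 4 ^ (k + 1) := by
        gcongr
        exact card_union_le _ _
    _ = _ + _ := by rw [Nat.cast_add, add_div]
    _ ≤ _ := by linarith

theorem P1_mul_lt_of_certificate {k p q : ℕ} (hqp : q ≤ p) (hpk : p ≤ k + 1)
    (h : 10 * k * (4 ^ q + ((k + 1 - p) / q + 1) * ((k + 1 - p) / q))
      < 74 * ((k + 1 - p) / q + 1) * 4 ^ q) :
    P1 k p * k < 74 / 5 := by
  set t := (k + 1 - p) / q
  have h' : 10 * (k : ℚ) * (4 ^ q + (t + 1) * t) < 74 * (t + 1) * 4 ^ q := by exact_mod_cast h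
  calc P1 k p * k ≤ 2 * (1 / ((t + 1 : ℕ) : ℚ) + t / 4 ^ q) * k := by
        gcongr
        exact P1_le hqp hpk
    _ < 74 / 5 := by
        push_cast
        rw [div_add_div _ _ (by positivity) (by positivity), mul_div_assoc', div_mul_eq_mul_div,
          div_lt_div_iff₀ (by positivity) (by norm_num)]
        linear_combination h'

-- `q = 5` alone fails exactly for `(k, p) ∈ {(96, 18), (96, 19), (97, 19)}`.
theorem exists_window_length_certificate : ∀ k < 100, ∀ p < 20, 4 < p → 5 * p < k →
    ∃ q ∈ [5, 6], q ≤ p ∧ 10 * k * (4 ^ q + ((k + 1 - p) / q + 1) * ((k + 1 - p) / q))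
      < 74 * ((k + 1 - p) / q + 1) * 4 ^ q := by
  decide

-- `74 / 5 = 2 (8.4 - 1)`, because `m = 2k`.
theorem P1_mul_lt (k p : ℕ) (hk : k < 100) (hp : 4 < p) (hpk : 5 * p < k) :
    P1 k p * k < 74 / 5 := by
  obtain ⟨q, -, hqp, h⟩ := exists_window_length_certificate k hk p (by omega) hp hpk
  exact P1_mul_lt_of_certificate hqp (by omega) h

/-- assuming `k = m/2`, `k < 100` and `4 < p < k/5`, the expected total
minimum-substring-partition size `(kl/m)n + n`, where `l = P₁(k,p)(m-k)` is the expected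
number of breaks per read, is less than `8.4 n`. -/
theorem stmt11 (m k p : ℕ) (n : ℚ) (hn : 0 < n)
    (hkm : 2 * k = m) (hk : k < 100) (hp : 4 < p) (hpk : 5 * p < k) :
    (k : ℚ) * (P1 k p * ((m - k : ℕ) : ℚ)) / (m : ℚ) * n + n < 8.4 * n := by
  subst hkm
  have hk₀ : (0 : ℚ) < k := by exact_mod_cast (by omega : 0 < k)
  have hsize : (k : ℚ) * (P1 k p * ((2 * k - k : ℕ) : ℚ)) / ((2 * k : ℕ) : ℚ)
      = P1 k p * k / 2 := by
    rw [show 2 * k - k = k by omega]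
    push_cast
    field_simp
  rw [hsize]
  nlinarith [P1_mul_lt k p hk hp hpk]
end

section
/- If two consecutive k-mers of a string share an occurrence position of their common minimum p-substring (i.e., the minimum p-substring occurrence of the first k-mer is not its prefix p-substring and the minimum p-substring occurrence of the second is not its suffix p-substring), then the two k-mers have equal minimum p-substrings. Consequently, a break between consecutive k-mers can occur only when the first or the last p-substring of the (k+1)-length window spanning both k-mers is the unique minimum p-substring of that window. -/
def psubs {α : Type*} (s : List α) (p : ℕ) : List (List α) :=
  (List.range (s.length + 1 - p)).map fun i => substr s i p

/-- The lexicographically minimum `p`-substring of `s`. -/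
def minp {α : Type*} [LinearOrder α] (s : List α) (p : ℕ) : List α :=
  ((psubs s p).min?).getD []

/-!
The `p`-substrings of `w.take k` sit at window positions `0, …, k - p`, those of `w.drop 1` at
positions `1, …, k + 1 - p`. Two minima attained at common positions bound each other. If the
minima differ, the smaller one is attained at a position the other `k`-mer lacks, so at `0` or at
`k + 1 - p`, and there it lies strictly below every `p`-substring of the other `k`-mer, hence
below every other `p`-substring of the window.
-/

theorem exists_forall_lt_of_mem_image_of_mem_lowerBounds {ι β : Type*} [Preorder β]
    {g : ι → β} {s t : Set ι} {a b : β} (ha : a ∈ g '' s) (hb : b ∈ lowerBounds (g '' t))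
    (hab : a < b) : ∃ x ∈ s, x ∉ t ∧ ∀ y ∈ t, g x < g y := by
  obtain ⟨x, hxs, rfl⟩ := ha
  refine ⟨x, hxs, fun hxt => (hab.trans_le (hb ⟨x, hxt, rfl⟩)).false, fun y hy => ?_⟩
  exact hab.trans_le (hb ⟨y, hy, rfl⟩)

section

variable {α : Type*}

theorem substr_take (w : List α) {k i p : ℕ} (h : i + p ≤ k) :
    substr (w.take k) i p = substr w i p := by
  simp only [substr, List.drop_take, List.take_take]
  rw [Nat.min_eq_left (by omega)]

theorem substr_drop_one (w : List α) (i p : ℕ) :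
    substr (w.drop 1) i p = substr w (i + 1) p := by
  simp [substr]

theorem mem_psubs {s : List α} {p : ℕ} {x : List α} :
    x ∈ psubs s p ↔ x ∈ (substr s · p) '' {i | i + p ≤ s.length} := by
  simp only [psubs, List.mem_map, List.mem_range, Set.mem_image, Set.mem_ofPred_eq]
  constructor <;> rintro ⟨i, hi, rfl⟩ <;> exact ⟨i, by omega, rfl⟩

variable [LinearOrder α]

theorem isLeast_minp {s : List α} {p : ℕ} (h : p ≤ s.length) :
    IsLeast ((substr s · p) '' {i | i + p ≤ s.length}) (minp s p) := by
  have hne : psubs s p ≠ [] := by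
    simp only [psubs, ne_eq, List.map_eq_nil_iff, List.range_eq_nil]
    omega
  have hmin : minp s p = (psubs s p).min hne := by
    rw [minp, List.min?_eq_some_min hne]; rfl
  rw [hmin]
  exact ⟨mem_psubs.1 (List.min_mem hne), fun x hx => List.min_le_of_mem (mem_psubs.2 hx)⟩

theorem isLeast_minp_take {w : List α} {k p : ℕ} (hk : k ≤ w.length) (hpk : p ≤ k) :
    IsLeast ((substr w · p) '' {i | i + p ≤ k}) (minp (w.take k) p) := by
  have hlen : (w.take k).length = k := by simp [hk]
  convert isLeast_minp (s := w.take k) (p := p) (by omega) using 1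
  rw [hlen]
  exact Set.image_congr fun i hi => (substr_take w hi).symm

theorem isLeast_minp_drop_one {w : List α} {p : ℕ} (hp : p + 1 ≤ w.length) :
    IsLeast ((substr w · p) '' {j | 1 ≤ j ∧ j + p ≤ w.length}) (minp (w.drop 1) p) := by
  convert isLeast_minp (s := w.drop 1) (p := p) (by simp; omega) using 1
  ext x
  simp only [Set.mem_image, Set.mem_ofPred_eq, List.length_drop, substr_drop_one]
  constructor
  · rintro ⟨j, ⟨hj1, hj⟩, rfl⟩
    exact ⟨j - 1, by omega, by rw [Nat.sub_add_cancel hj1]⟩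
  · rintro ⟨i, hi, rfl⟩
    exact ⟨i + 1, ⟨by omega, by omega⟩, rfl⟩

end

theorem stmt18_general {α : Type*} [LinearOrder α] (k p : ℕ) (hpk : p ≤ k)
    (w : List α) (hw : w.length = k + 1) :
    ((∃ i, 1 ≤ i ∧ i + p ≤ k ∧ substr w i p = minp (w.take k) p) →
     (∃ j, 1 ≤ j ∧ j + p ≤ k ∧ substr w j p = minp (w.drop 1) p) →
     minp (w.take k) p = minp (w.drop 1) p) ∧
    (minp (w.take k) p ≠ minp (w.drop 1) p →
      (∀ j, j + p ≤ k + 1 → j ≠ 0 → substr w 0 p < substr w j p) ∨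
      (∀ j, j + p ≤ k + 1 → j ≠ k + 1 - p → substr w (k + 1 - p) p < substr w j p)) := by
  have hA := isLeast_minp_take (w := w) (by omega) hpk
  have hB := isLeast_minp_drop_one (w := w) (p := p) (by omega)
  rw [hw] at hB
  refine ⟨?_, fun hne => ?_⟩
  · rintro ⟨i, hi1, hik, hi⟩ ⟨j, -, hjk, hj⟩
    exact le_antisymm (hA.2 ⟨j, hjk, hj⟩) (hB.2 ⟨i, ⟨hi1, by omega⟩, hi⟩)
  rcases hne.lt_or_gt with hlt | hlt
  · obtain ⟨x, hxA, hxB, hx⟩ := exists_forall_lt_of_mem_image_of_mem_lowerBounds hA.1 hB.2 hlt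
    obtain rfl : x = 0 := by simp only [Set.mem_ofPred_eq] at hxA hxB; omega
    exact Or.inl fun j hj hj0 => hx j ⟨by omega, hj⟩
  · obtain ⟨x, hxB, hxA, hx⟩ := exists_forall_lt_of_mem_image_of_mem_lowerBounds hB.1 hA.2 hlt
    obtain rfl : x = k + 1 - p := by simp only [Set.mem_ofPred_eq] at hxA hxB; omega
    exact Or.inr fun j hj hjL => hx j (by simp only [Set.mem_ofPred_eq]; omega)

/-- let `w` be the length-(k+1) window spanning two consecutive k-mers
`A = w.take k` and `B = w.drop 1`. If the minimum `p`-substring of `A` occurs at a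
position other than its prefix (i.e., at some window position `i ≥ 1` with `i + p ≤ k`)
and the minimum `p`-substring of `B` occurs at a position other than its suffix (some
window position `j ≥ 1` with `j + p ≤ k`), then the two minima are equal. Consequently,
a break (`minp A ≠ minp B`) can occur only when the first or the last `p`-substring of
the window is the unique minimum `p`-substring of the window. -/
theorem stmt18 {α : Type*} [LinearOrder α] (k p : ℕ) (hp : 0 < p) (hpk : p ≤ k)
    (w : List α) (hw : w.length = k + 1) :
    ((∃ i, 1 ≤ i ∧ i + p ≤ k ∧ substr w i p = minp (w.take k) p) →
     (∃ j, 1 ≤ j ∧ j + p ≤ k ∧ substr w j p = minp (w.drop 1) p) →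
     minp (w.take k) p = minp (w.drop 1) p) ∧
    (minp (w.take k) p ≠ minp (w.drop 1) p →
      (∀ j, j + p ≤ k + 1 → j ≠ 0 → substr w 0 p < substr w j p) ∨
      (∀ j, j + p ≤ k + 1 → j ≠ k + 1 - p → substr w (k + 1 - p) p < substr w j p)) :=
  stmt18_general k p hpk w hw
end
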